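/- Assume ᾱ_ν(q,v,t) = α_ν(q,v,t) for every ν = 1,…,k and every (q,v,t). Then: (i) if (∂L/∂t)(q,u,t) = 0 for all (q,u,t), the function E* is a first integral, i.e. t ↦ E*(q(t),v(t),t) is constant along every C² curve satisfying the constraints and solving the Voronec equations; (ii) conversely, if t ↦ E*(q(t),v(t),t) is constant along such a curve, then (∂L/∂t)(q(t), û(q(t),v(t),t), t) = 0 at every time t along that curve. -/

import Mathlib

open scoped BigOperators
noncomputable section
namespace NH

/-- The phase point `(q, v, t)` with `q : ℝⁿ` (n = m+k) and independent velocities `v : ℝᵐ`. -/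
abbrev Pt (m k : ℕ) : Type := (Fin (m+k) → ℝ) × (Fin m → ℝ) × ℝ

/-- The full phase point `(q, u, t)` with all velocities `u : ℝⁿ`. -/
abbrev PtL (m k : ℕ) : Type := (Fin (m+k) → ℝ) × (Fin (m+k) → ℝ) × ℝ

/-- Partial derivative of `f (q, w, t)` with respect to `q_i`. -/
def pq {n m' : ℕ} (f : (Fin n → ℝ) × (Fin m' → ℝ) × ℝ → ℝ) (i : Fin n)
    (x : (Fin n → ℝ) × (Fin m' → ℝ) × ℝ) : ℝ :=
  fderiv ℝ f x (Pi.single i 1, 0, 0)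

/-- Partial derivative of `f (q, w, t)` with respect to the velocity variable `w_j`. -/
def pv {n m' : ℕ} (f : (Fin n → ℝ) × (Fin m' → ℝ) × ℝ → ℝ) (j : Fin m')
    (x : (Fin n → ℝ) × (Fin m' → ℝ) × ℝ) : ℝ :=
  fderiv ℝ f x (0, Pi.single j 1, 0)

/-- Partial derivative of `f (q, w, t)` with respect to time `t`. -/
def pt {n m' : ℕ} (f : (Fin n → ℝ) × (Fin m' → ℝ) × ℝ → ℝ)
    (x : (Fin n → ℝ) × (Fin m' → ℝ) × ℝ) : ℝ :=
  fderiv ℝ f x (0, 0, 1)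

/-- Partial derivative of `U (q, t)` with respect to `q_i`. -/
def pUq {n : ℕ} (U : (Fin n → ℝ) × ℝ → ℝ) (i : Fin n) (x : (Fin n → ℝ) × ℝ) : ℝ :=
  fderiv ℝ U x (Pi.single i 1, 0)

/-- Partial derivative of `U (q, t)` with respect to `t`. -/
def pUt {n : ℕ} (U : (Fin n → ℝ) × ℝ → ℝ) (x : (Fin n → ℝ) × ℝ) : ℝ :=
  fderiv ℝ U x (0, 1)

variable {m k : ℕ}

/-- `û(q,v,t) = (v₁,…,vₘ, α₁(q,v,t),…,α_k(q,v,t))`. -/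
def uhat (α : Fin k → Pt m k → ℝ) (x : Pt m k) : Fin (m+k) → ℝ :=
  Fin.append x.2.1 (fun ν => α ν x)

/-- The full phase point `(q, û(q,v,t), t)` associated to `(q,v,t)`. -/
def Lpt (α : Fin k → Pt m k → ℝ) (x : Pt m k) : PtL m k :=
  (x.1, uhat α x, x.2.2)

/-- The restricted Lagrangian `L*(q,v,t) = L(q, û(q,v,t), t)`. -/
def Lstar (L : PtL m k → ℝ) (α : Fin k → Pt m k → ℝ) (x : Pt m k) : ℝ :=
  L (Lpt α x)

/-- `ᾱ_ν(q,v,t) = ∑_r v_r ∂α_ν/∂v_r`. -/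
def abar (α : Fin k → Pt m k → ℝ) (ν : Fin k) (x : Pt m k) : ℝ :=
  ∑ r : Fin m, x.2.1 r * pv (α ν) r x

/-- The restricted energy `E*(q,v,t) = ∑_r v_r ∂L*/∂v_r − L*`. -/
def Estar (L : PtL m k → ℝ) (α : Fin k → Pt m k → ℝ) (x : Pt m k) : ℝ :=
  ∑ r : Fin m, x.2.1 r * pv (Lstar L α) r x - Lstar L α x

/-- The energy `E(q,v,t) = ∑_i û_i (∂L/∂u_i)(q,û,t) − L*(q,v,t)`. -/
def En (L : PtL m k → ℝ) (α : Fin k → Pt m k → ℝ) (x : Pt m k) : ℝ :=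
  ∑ i : Fin (m+k), uhat α x i * pv L i (Lpt α x) - Lstar L α x

/-- `q̇_i(t)`. -/
def qdot {n : ℕ} (q : ℝ → Fin n → ℝ) (t : ℝ) (i : Fin n) : ℝ :=
  deriv (fun s => q s i) t

/-- The independent velocities `v(t) = (q̇₁,…,q̇ₘ)` along a curve. -/
def vel (m k : ℕ) (q : ℝ → Fin (m+k) → ℝ) (t : ℝ) (r : Fin m) : ℝ :=
  qdot q t (Fin.castAdd k r)

/-- The point `(q(t), v(t), t)` along a curve. -/
def along (m k : ℕ) (q : ℝ → Fin (m+k) → ℝ) (t : ℝ) : Pt m k :=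
  (q t, vel m k q t, t)

/-- The curve satisfies the nonholonomic constraints: `q̇_{m+ν} = α_ν(q, v, t)`. -/
def Constrained (α : Fin k → Pt m k → ℝ) (q : ℝ → Fin (m+k) → ℝ) : Prop :=
  ∀ (t : ℝ) (ν : Fin k), qdot q t (Fin.natAdd m ν) = α ν (along m k q t)

/-- The Voronec coefficients `B_rν(t)` along a constrained curve. -/
def Bco (α : Fin k → Pt m k → ℝ) (q : ℝ → Fin (m+k) → ℝ) (r : Fin m) (ν : Fin k) (t : ℝ) : ℝ :=
  deriv (fun s => pv (α ν) r (along m k q s)) t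
    - pq (α ν) (Fin.castAdd k r) (along m k q t)
    - ∑ μ : Fin k, pv (α μ) r (along m k q t) * pq (α ν) (Fin.natAdd m μ) (along m k q t)

/-- The Voronec equations of motion along a constrained curve. -/
def Voronec (L : PtL m k → ℝ) (α : Fin k → Pt m k → ℝ) (q : ℝ → Fin (m+k) → ℝ) : Prop :=
  ∀ (r : Fin m) (t : ℝ),
    deriv (fun s => pv (Lstar L α) r (along m k q s)) t
      - pq (Lstar L α) (Fin.castAdd k r) (along m k q t)
      - ∑ ν : Fin k, pq (Lstar L α) (Fin.natAdd m ν) (along m k q t) * pv (α ν) r (along m k q t)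
      - ∑ ν : Fin k, Bco α q r ν t * pv L (Fin.natAdd m ν) (Lpt α (along m k q t)) = 0

/-! Along a constrained curve, `dE*/dt = ∑_r v̇_r ∂L*/∂v_r + ∑_r v_r d/dt(∂L*/∂v_r) − dL*/dt`.
Insert the Voronec equations for `d/dt(∂L*/∂v_r)` and the chain rule for `dL*/dt`. The identity
`ᾱ_ν = α_ν` makes `∑_r v_r ∂α_ν/∂v_r` cancel against `α_ν`, and, differentiated along the curve,
it gives `∑_r v_r B_rν = ∂α_ν/∂t`. Since `∂L*/∂t = ∂L/∂t + ∑_ν ∂L/∂u_{m+ν} ∂α_ν/∂t`, what is left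
is `dE*/dt = −∂L/∂t (q, û, t)`, from which both directions follow. -/

lemma fderiv_apply_eq_sum_partials {n m' : ℕ} (f : (Fin n → ℝ) × (Fin m' → ℝ) × ℝ → ℝ)
    (x : (Fin n → ℝ) × (Fin m' → ℝ) × ℝ) (a : Fin n → ℝ) (b : Fin m' → ℝ) (c : ℝ) :
    fderiv ℝ f x (a, b, c) = ∑ i, a i * pq f i x + ∑ j, b j * pv f j x + c * pt f x := by
  have hdecomp : ((a, b, c) : (Fin n → ℝ) × (Fin m' → ℝ) × ℝ)
      = ∑ i, a i • (Pi.single i 1, 0, 0) + ∑ j, b j • (0, Pi.single j 1, 0) + c • (0, 0, 1) := by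
    ext <;> simp [Prod.fst_sum, Prod.snd_sum, Finset.sum_apply, Pi.single_apply]
  simp only [hdecomp, map_add, map_sum, map_smul, smul_eq_mul, pq, pv, pt]

lemma hasDerivAt_comp_eq_sum_partials {n m' : ℕ} {f : (Fin n → ℝ) × (Fin m' → ℝ) × ℝ → ℝ}
    {γ : ℝ → (Fin n → ℝ) × (Fin m' → ℝ) × ℝ} {a : Fin n → ℝ} {b : Fin m' → ℝ} {c t : ℝ}
    (hf : DifferentiableAt ℝ f (γ t)) (hγ : HasDerivAt γ (a, b, c) t) :
    HasDerivAt (fun s => f (γ s))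
      (∑ i, a i * pq f i (γ t) + ∑ j, b j * pv f j (γ t) + c * pt f (γ t)) t := by
  rw [← fderiv_apply_eq_sum_partials]
  exact hf.hasFDerivAt.comp_hasDerivAt t hγ

lemma hasDerivAt_pt {n m' : ℕ} {f : (Fin n → ℝ) × (Fin m' → ℝ) × ℝ → ℝ}
    {x : (Fin n → ℝ) × (Fin m' → ℝ) × ℝ} (hf : DifferentiableAt ℝ f x) :
    HasDerivAt (fun s => f (x.1, x.2.1, s)) (pt f x) x.2.2 :=
  hf.hasFDerivAt.comp_hasDerivAt x.2.2
    ((hasDerivAt_const _ _).prodMk ((hasDerivAt_const _ _).prodMk (hasDerivAt_id _)))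

lemma contDiff_pv {n m' : ℕ} {f : (Fin n → ℝ) × (Fin m' → ℝ) × ℝ → ℝ}
    (hf : ContDiff ℝ 2 f) (j : Fin m') : ContDiff ℝ 1 (pv f j) :=
  (ContinuousLinearMap.apply ℝ ℝ _).contDiff.comp (hf.fderiv_right (by norm_num))

lemma contDiff_uhat {α : Fin k → Pt m k → ℝ} (hα : ∀ ν, ContDiff ℝ 2 (α ν)) :
    ContDiff ℝ 2 (uhat α) := by
  refine contDiff_pi.2 fun i => ?_
  induction i using Fin.addCases with
  | left r =>
    simp only [uhat, Fin.append_left]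
    exact (contDiff_apply ℝ ℝ r).comp (contDiff_fst.comp contDiff_snd)
  | right ν => simpa only [uhat, Fin.append_right] using hα ν

lemma contDiff_Lstar {L : PtL m k → ℝ} (hL : ContDiff ℝ 2 L)
    {α : Fin k → Pt m k → ℝ} (hα : ∀ ν, ContDiff ℝ 2 (α ν)) :
    ContDiff ℝ 2 (Lstar L α) :=
  hL.comp (contDiff_fst.prodMk ((contDiff_uhat hα).prodMk (contDiff_snd.comp contDiff_snd)))

lemma pt_Lstar {L : PtL m k → ℝ} (hL : ContDiff ℝ 2 L)
    {α : Fin k → Pt m k → ℝ} (hα : ∀ ν, ContDiff ℝ 2 (α ν)) (x : Pt m k) :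
    pt (Lstar L α) x = pt L (Lpt α x) + ∑ ν, pv L (Fin.natAdd m ν) (Lpt α x) * pt (α ν) x := by
  have huhat : HasDerivAt (fun s => uhat α (x.1, x.2.1, s))
      (Fin.append (0 : Fin m → ℝ) fun ν => pt (α ν) x) x.2.2 := by
    refine hasDerivAt_pi.2 fun i => ?_
    induction i using Fin.addCases with
    | left r => simpa only [uhat, Fin.append_left, Pi.zero_apply] using hasDerivAt_const _ _
    | right ν => simpa only [uhat, Fin.append_right] using hasDerivAt_pt ((hα ν).differentiable (by norm_num) x)
  have hchain := hasDerivAt_comp_eq_sum_partials (f := L) (hL.differentiable (by norm_num) _)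
    ((hasDerivAt_const x.2.2 x.1).prodMk (huhat.prodMk (hasDerivAt_id x.2.2)))
  have hdirect := hasDerivAt_pt ((contDiff_Lstar hL hα).differentiable (by norm_num) x)
  rw [hdirect.unique hchain]
  simp [Lpt, Fin.sum_univ_add, add_comm, mul_comm]

lemma sum_mul_sum_mul_comm {ι κ : Type*} [Fintype ι] [Fintype κ] (v : ι → ℝ) (g : ι → κ → ℝ)
    (c : κ → ℝ) : ∑ i, v i * ∑ j, g i j * c j = ∑ j, (∑ i, v i * g i j) * c j :=
  Matrix.dotProduct_mulVec v (Matrix.of g) c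

lemma sum_mul_sum_pv_mul_of_abar_eq {α : Fin k → Pt m k → ℝ}
    (habar : ∀ (ν : Fin k) (x : Pt m k), abar α ν x = α ν x) (x : Pt m k) (c : Fin k → ℝ) :
    ∑ r, x.2.1 r * ∑ ν, pv (α ν) r x * c ν = ∑ ν, α ν x * c ν := by
  rw [sum_mul_sum_mul_comm]
  exact Finset.sum_congr rfl fun ν _ => by rw [← habar ν x, abar]

section Curve

variable {q : ℝ → Fin (m+k) → ℝ}

lemma contDiff_vel (hq : ContDiff ℝ 2 q) (r : Fin m) : ContDiff ℝ 1 (fun s => vel m k q s r) :=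
  ((contDiff_pi.1 hq) (Fin.castAdd k r)).deriv'

def vdot (q : ℝ → Fin (m+k) → ℝ) (t : ℝ) (r : Fin m) : ℝ :=
  deriv (fun s => vel m k q s r) t

lemma hasDerivAt_along (hq : ContDiff ℝ 2 q) (t : ℝ) :
    HasDerivAt (along m k q) (qdot q t, vdot q t, 1) t := by
  refine (hasDerivAt_pi.2 fun i => ?_).prodMk
    ((hasDerivAt_pi.2 fun r => ?_).prodMk (hasDerivAt_id t))
  · exact (((contDiff_pi.1 hq) i).differentiable (by norm_num) t).hasDerivAt
  · exact ((contDiff_vel hq r).differentiable one_ne_zero t).hasDerivAt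

lemma hasDerivAt_comp_along {α : Fin k → Pt m k → ℝ} (hq : ContDiff ℝ 2 q)
    (hcon : Constrained α q) {f : Pt m k → ℝ} {t : ℝ}
    (hf : DifferentiableAt ℝ f (along m k q t)) :
    HasDerivAt (fun s => f (along m k q s))
      (∑ r, vel m k q t r * pq f (Fin.castAdd k r) (along m k q t)
        + ∑ ν, α ν (along m k q t) * pq f (Fin.natAdd m ν) (along m k q t)
        + ∑ r, vdot q t r * pv f r (along m k q t) + pt f (along m k q t)) t := by
  simpa only [Fin.sum_univ_add, hcon t, vel, one_mul] using
    hasDerivAt_comp_eq_sum_partials hf (hasDerivAt_along hq t)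

lemma differentiableAt_pv_along {f : Pt m k → ℝ} (hf : ContDiff ℝ 2 f) (hq : ContDiff ℝ 2 q)
    (r : Fin m) (t : ℝ) : DifferentiableAt ℝ (fun s => pv f r (along m k q s)) t :=
  ((contDiff_pv hf r).differentiable one_ne_zero _).comp t (hasDerivAt_along hq t).differentiableAt

lemma hasDerivAt_sum_vel_mul (hq : ContDiff ℝ 2 q) {g : Fin m → ℝ → ℝ} {t : ℝ}
    (hg : ∀ r, DifferentiableAt ℝ (g r) t) :
    HasDerivAt (fun s => ∑ r, vel m k q s r * g r s)
      (∑ r, (vdot q t r * g r t + vel m k q t r * deriv (g r) t)) t :=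
  HasDerivAt.fun_sum fun r _ =>
    ((contDiff_vel hq r).differentiable one_ne_zero t).hasDerivAt.mul (hg r).hasDerivAt

end Curve

section Motion

variable {L : PtL m k → ℝ} {α : Fin k → Pt m k → ℝ} {q : ℝ → Fin (m+k) → ℝ}

lemma sum_vel_mul_Bco (hα : ∀ ν, ContDiff ℝ 2 (α ν))
    (habar : ∀ (ν : Fin k) (x : Pt m k), abar α ν x = α ν x)
    (hq : ContDiff ℝ 2 q) (hcon : Constrained α q) (ν : Fin k) (t : ℝ) :
    ∑ r, vel m k q t r * Bco α q r ν t = pt (α ν) (along m k q t) := by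
  have hsum := hasDerivAt_sum_vel_mul hq fun r => differentiableAt_pv_along (hα ν) hq r t
  have heq : (fun s => ∑ r, vel m k q s r * pv (α ν) r (along m k q s))
      = fun s => α ν (along m k q s) := funext fun s => habar ν (along m k q s)
  rw [heq] at hsum
  have hderiv := hsum.unique
    (hasDerivAt_comp_along hq hcon ((hα ν).differentiable (by norm_num) _))
  have hcontract : ∑ r, vel m k q t r
        * ∑ μ, pv (α μ) r (along m k q t) * pq (α ν) (Fin.natAdd m μ) (along m k q t)
      = ∑ μ, α μ (along m k q t) * pq (α ν) (Fin.natAdd m μ) (along m k q t) :=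
    sum_mul_sum_pv_mul_of_abar_eq habar (along m k q t) _
  simp only [Bco, mul_sub, Finset.sum_sub_distrib]
  rw [Finset.sum_add_distrib] at hderiv
  linarith

lemma Voronec.sum_vel_mul_deriv_pv (hα : ∀ ν, ContDiff ℝ 2 (α ν))
    (habar : ∀ (ν : Fin k) (x : Pt m k), abar α ν x = α ν x)
    (hq : ContDiff ℝ 2 q) (hcon : Constrained α q) (hvor : Voronec L α q) (t : ℝ) :
    ∑ r, vel m k q t r * deriv (fun s => pv (Lstar L α) r (along m k q s)) t
      = ∑ r, vel m k q t r * pq (Lstar L α) (Fin.castAdd k r) (along m k q t)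
        + ∑ ν, α ν (along m k q t) * pq (Lstar L α) (Fin.natAdd m ν) (along m k q t)
        + ∑ ν, pv L (Fin.natAdd m ν) (Lpt α (along m k q t)) * pt (α ν) (along m k q t) := by
  have hmotion : ∀ r, deriv (fun s => pv (Lstar L α) r (along m k q s)) t
      = pq (Lstar L α) (Fin.castAdd k r) (along m k q t)
        + ∑ ν, pv (α ν) r (along m k q t) * pq (Lstar L α) (Fin.natAdd m ν) (along m k q t)
        + ∑ ν, Bco α q r ν t * pv L (Fin.natAdd m ν) (Lpt α (along m k q t)) := fun r => by
    simp only [mul_comm (pv (α _) r _)]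
    linarith [hvor r t]
  have hcontract : ∑ r, vel m k q t r
        * ∑ ν, pv (α ν) r (along m k q t) * pq (Lstar L α) (Fin.natAdd m ν) (along m k q t)
      = ∑ ν, α ν (along m k q t) * pq (Lstar L α) (Fin.natAdd m ν) (along m k q t) :=
    sum_mul_sum_pv_mul_of_abar_eq habar (along m k q t) _
  simp only [hmotion, mul_add, Finset.sum_add_distrib, hcontract, sum_mul_sum_mul_comm,
    sum_vel_mul_Bco hα habar hq hcon, mul_comm (pt _ _)]

lemma hasDerivAt_Estar_along (hL : ContDiff ℝ 2 L) (hα : ∀ ν, ContDiff ℝ 2 (α ν))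
    (habar : ∀ (ν : Fin k) (x : Pt m k), abar α ν x = α ν x)
    (hq : ContDiff ℝ 2 q) (hcon : Constrained α q) (hvor : Voronec L α q) (t : ℝ) :
    HasDerivAt (fun s => Estar L α (along m k q s)) (-pt L (Lpt α (along m k q t))) t := by
  have hLstar := contDiff_Lstar hL hα
  have hmomentum := hasDerivAt_sum_vel_mul hq fun r => differentiableAt_pv_along hLstar hq r t
  have hlagrangian :=
    hasDerivAt_comp_along hq hcon (hLstar.differentiable (by norm_num) (along m k q t))
  refine (hmomentum.sub hlagrangian).congr_deriv ?_
  rw [Finset.sum_add_distrib, hvor.sum_vel_mul_deriv_pv hα habar hq hcon, pt_Lstar hL hα]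
  ring

end Motion

theorem first_integral_iff_general (m k : ℕ)
    (L : PtL m k → ℝ) (hL : ContDiff ℝ 2 L)
    (α : Fin k → Pt m k → ℝ) (hα : ∀ ν, ContDiff ℝ 2 (α ν))
    (habar : ∀ (ν : Fin k) (x : Pt m k), abar α ν x = α ν x) :
    ((∀ x : PtL m k, pt L x = 0) →
      ∀ (q : ℝ → Fin (m+k) → ℝ), ContDiff ℝ 2 q → Constrained α q → Voronec L α q →
        ∀ t₁ t₂ : ℝ, Estar L α (along m k q t₁) = Estar L α (along m k q t₂))
    ∧ (∀ (q : ℝ → Fin (m+k) → ℝ), ContDiff ℝ 2 q → Constrained α q → Voronec L α q →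
        (∀ t₁ t₂ : ℝ, Estar L α (along m k q t₁) = Estar L α (along m k q t₂)) →
        ∀ t : ℝ, pt L (Lpt α (along m k q t)) = 0) := by
  refine ⟨fun hpt q hq hcon hvor t₁ t₂ => ?_, fun q hq hcon hvor hconst t => ?_⟩
  · have hderiv := hasDerivAt_Estar_along hL hα habar hq hcon hvor
    exact is_const_of_deriv_eq_zero (fun t => (hderiv t).differentiableAt)
      (fun t => by rw [(hderiv t).deriv, hpt, neg_zero]) t₁ t₂
  · have hderiv := hasDerivAt_Estar_along hL hα habar hq hcon hvor t
    rw [funext fun s => hconst s t] at hderiv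
    exact neg_eq_zero.1 (hderiv.unique (hasDerivAt_const t _))

theorem first_integral_iff (m k : ℕ) (hm : 0 < m) (hk : 0 < k)
    (L : PtL m k → ℝ) (hL : ContDiff ℝ 2 L)
    (α : Fin k → Pt m k → ℝ) (hα : ∀ ν, ContDiff ℝ 2 (α ν))
    (habar : ∀ (ν : Fin k) (x : Pt m k), abar α ν x = α ν x) :
    ((∀ x : PtL m k, pt L x = 0) →
      ∀ (q : ℝ → Fin (m+k) → ℝ), ContDiff ℝ 2 q → Constrained α q → Voronec L α q →
        ∀ t₁ t₂ : ℝ, Estar L α (along m k q t₁) = Estar L α (along m k q t₂))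
    ∧ (∀ (q : ℝ → Fin (m+k) → ℝ), ContDiff ℝ 2 q → Constrained α q → Voronec L α q →
        (∀ t₁ t₂ : ℝ, Estar L α (along m k q t₁) = Estar L α (along m k q t₂)) →
        ∀ t : ℝ, pt L (Lpt α (along m k q t)) = 0) :=
  first_integral_iff_general m k L hL α hα habar

end NH
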